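/- In the algorithmic setting described in the context, assuming additionally that f is twice continuously differentiable, the sequences {X^k} and {Y^k} are bounded, and there exists a constant C₁ > 0 such that σ₁((X^k + Y^k)/2 − ∇f(Y^k)/(2β)) ≤ C₁ for all k ∈ ℕ (i.e. the largest singular value of (X^k + Y^k)/2 − ∇f(Y^k)/(2β) is uniformly bounded). -/

import Mathlib

open Filter Topology Matrix

/-- The singular values of a real `m × n` matrix (`m ≤ n`), in nonincreasing order:
`sval X i` is the `(i+1)`-th largest singular value of `X`. -/
noncomputable def sval {m n : ℕ} (X : Matrix (Fin m) (Fin n) ℝ) : Fin m → ℝ :=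
  fun i =>
    let ev : Fin m → ℝ := (Matrix.isHermitian_mul_conjTranspose_self X).eigenvalues
    Real.sqrt (ev (Tuple.sort ev i.rev))

/-- The `m × n` matrix with the vector `d` on its main diagonal and zeros elsewhere. -/
def rdiag {m n : ℕ} (d : Fin m → ℝ) : Matrix (Fin m) (Fin n) ℝ :=
  Matrix.of fun i j => if (j : ℕ) = (i : ℕ) then d i else 0

/-- The Frobenius norm of a matrix. -/
noncomputable def frobNorm {m n : ℕ} (X : Matrix (Fin m) (Fin n) ℝ) : ℝ :=
  Real.sqrt (∑ i, ∑ j, (X i j) ^ 2)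

/-- The Frobenius (trace) inner product of two matrices. -/
def finner {m n : ℕ} (A B : Matrix (Fin m) (Fin n) ℝ) : ℝ :=
  ∑ i, ∑ j, A i j * B i j

/-- `G` is the (Fréchet) gradient of `f : ℝ^{m×n} → ℝ` at `X`, with respect to the
Frobenius inner product. -/
def HasFrobGradientAt {m n : ℕ} (f : Matrix (Fin m) (Fin n) ℝ → ℝ)
    (G X : Matrix (Fin m) (Fin n) ℝ) : Prop :=
  Filter.Tendsto
    (fun H : Matrix (Fin m) (Fin n) ℝ => |f (X + H) - f X - finner G H| / frobNorm H)
    (nhdsWithin 0 {0}ᶜ) (nhds 0)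

attribute [local instance] Matrix.frobeniusNormedAddCommGroup Matrix.frobeniusNormedSpace

/-! The potential `H_k = f(X^k) + λ ∑ᵢ (σᵢ(X^k) + εᵢ^k)^p + (β/2)‖X^k − X^{k−1}‖²` is
nonincreasing. Testing the subproblem at `Z = X^k`, the two-sided descent lemma at `Y^k` turns the
linearised objective back into `f`, concavity of `t ↦ t^p` (with `ε^{k+1} ≤ ε^k`) bounds the new
penalty by its reweighted linearisation, and `ᾱ² < β/(3L_f + β)` gives `(β + L_f)α_k² ≤ β`, so the
extrapolation error `((β + L_f)/2)‖X^k − Y^k‖²` is paid for by `(β/2)‖X^k − X^{k−1}‖²`.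
Hence `F(X^k) ≤ H_0` for all `k`, level-boundedness of `F` bounds `{X^k}` and with it `{Y^k}`,
the Lipschitz gradient is bounded on bounded sets, and `σ₁ ≤ ‖·‖_F` gives the last bound. -/

section DescentLemma

variable {E : Type*} [NormedAddCommGroup E] [NormedSpace ℝ E]

theorem abs_sub_sub_fderiv_le_of_lipschitz {f : E → ℝ} {f' : E → E →L[ℝ] ℝ} {L : ℝ}
    (hf : ∀ x, HasFDerivAt f (f' x) x) (hL : ∀ x y v, |f' x v - f' y v| ≤ L * ‖x - y‖ * ‖v‖)
    (x y : E) :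
    |f y - f x - f' x (y - x)| ≤ L / 2 * ‖y - x‖ ^ 2 := by
  set d := y - x
  let g : ℝ → ℝ := fun t => f (x + t • d) - f x - t * f' x d
  have hg : ∀ t, HasDerivAt g ((f' (x + t • d) - f' x) d) t := by
    intro t
    have hline : HasDerivAt (fun t : ℝ => x + t • d) d t := by
      simpa using ((hasDerivAt_id t).smul_const d).const_add x
    exact ((((hf _).comp_hasDerivAt t hline).sub_const (f x)).sub
      ((hasDerivAt_id t).mul_const (f' x d))).congr_deriv (by simp)
  have hbound : ∀ t ∈ Set.Ico (0 : ℝ) 1, ‖(f' (x + t • d) - f' x) d‖ ≤ L * t * ‖d‖ ^ 2 := by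
    intro t ht
    calc ‖(f' (x + t • d) - f' x) d‖ ≤ L * ‖t • d‖ * ‖d‖ := by simpa using hL (x + t • d) x d
      _ = L * t * ‖d‖ ^ 2 := by rw [norm_smul, Real.norm_of_nonneg ht.1]; ring
  have hB : ∀ t : ℝ, HasDerivAt (fun t => L / 2 * t ^ 2 * ‖d‖ ^ 2) (L * t * ‖d‖ ^ 2) t := by
    intro t
    exact (((hasDerivAt_pow 2 t).const_mul (L / 2)).mul_const (‖d‖ ^ 2)).congr_deriv
      (by push_cast; ring)
  have := image_norm_le_of_norm_deriv_right_le_deriv_boundary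
    (continuous_iff_continuousAt.2 fun t => (hg t).continuousAt).continuousOn
    (fun t _ => (hg t).hasDerivWithinAt) (by simp [g]) hB hbound (Set.right_mem_Icc.2 zero_le_one)
  simpa [g, d] using this

end DescentLemma

section Frobenius

variable {m n : ℕ}

theorem frobNorm_eq_norm (X : Matrix (Fin m) (Fin n) ℝ) : frobNorm X = ‖X‖ := by
  simp [frobNorm, Matrix.frobenius_norm_def, Real.sqrt_eq_rpow]

theorem finner_comm (A B : Matrix (Fin m) (Fin n) ℝ) : finner A B = finner B A := by
  simp only [finner, mul_comm]

theorem finner_sub_left (A B C : Matrix (Fin m) (Fin n) ℝ) :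
    finner (A - B) C = finner A C - finner B C := by
  simp [finner, sub_mul, Finset.sum_sub_distrib]

theorem abs_finner_le (A B : Matrix (Fin m) (Fin n) ℝ) : |finner A B| ≤ ‖A‖ * ‖B‖ := by
  have hCS : finner A B ^ 2 ≤ (∑ i, ∑ j, A i j ^ 2) * ∑ i, ∑ j, B i j ^ 2 := by
    simpa [Fintype.sum_prod_type, finner] using
      Finset.sum_mul_sq_le_sq_mul_sq Finset.univ
        (fun q : Fin m × Fin n => A q.1 q.2) (fun q : Fin m × Fin n => B q.1 q.2)
  rw [← frobNorm_eq_norm, ← frobNorm_eq_norm, frobNorm, frobNorm, ← Real.sqrt_mul (by positivity),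
    ← Real.sqrt_sq_eq_abs]
  exact Real.sqrt_le_sqrt hCS

noncomputable def finnerCLM (G : Matrix (Fin m) (Fin n) ℝ) : Matrix (Fin m) (Fin n) ℝ →L[ℝ] ℝ :=
  LinearMap.mkContinuous
    { toFun := finner G
      map_add' := fun A B => by simp [finner, mul_add, Finset.sum_add_distrib]
      map_smul' := fun c A => by simp [finner, Finset.mul_sum, mul_left_comm] }
    ‖G‖ fun H => abs_finner_le G H

theorem HasFrobGradientAt.hasFDerivAt {f : Matrix (Fin m) (Fin n) ℝ → ℝ}
    {G X : Matrix (Fin m) (Fin n) ℝ} (h : HasFrobGradientAt f G X) :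
    HasFDerivAt f (finnerCLM G) X := by
  have h0 : Tendsto (fun H => |f (X + H) - f X - finner G H| / frobNorm H) (𝓝 0) (𝓝 0) := by
    rw [← nhdsNE_sup_pure, tendsto_sup, tendsto_pure_left]
    exact ⟨h, fun s hs => by simpa [finner, frobNorm] using mem_of_mem_nhds hs⟩
  apply hasFDerivAt_iff_tendsto.2
  refine (h0.comp (tendsto_sub_nhds_zero_iff.2 tendsto_id)).congr fun Z => ?_
  simp only [Function.comp_apply, id_eq, add_sub_cancel, frobNorm_eq_norm, div_eq_inv_mul,
    Real.norm_eq_abs]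
  rfl

theorem abs_sub_sub_finner_le {f : Matrix (Fin m) (Fin n) ℝ → ℝ}
    {Gf : Matrix (Fin m) (Fin n) ℝ → Matrix (Fin m) (Fin n) ℝ} {L : ℝ}
    (hgrad : ∀ Z, HasFrobGradientAt f (Gf Z) Z)
    (hlip : ∀ Z W, frobNorm (Gf Z - Gf W) ≤ L * frobNorm (Z - W)) (A B : Matrix (Fin m) (Fin n) ℝ) :
    |f B - f A - finner (Gf A) (B - A)| ≤ L / 2 * frobNorm (B - A) ^ 2 := by
  simp only [frobNorm_eq_norm] at hlip ⊢
  refine abs_sub_sub_fderiv_le_of_lipschitz (fun Z => (hgrad Z).hasFDerivAt) (fun Z W V => ?_) A B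
  calc |finner (Gf Z) V - finner (Gf W) V| ≤ ‖Gf Z - Gf W‖ * ‖V‖ := by
        simpa [finner_sub_left] using abs_finner_le (Gf Z - Gf W) V
    _ ≤ L * ‖Z - W‖ * ‖V‖ := by gcongr; exact hlip Z W

end Frobenius

section SingularValues

variable {m n : ℕ}

theorem sval_nonneg (X : Matrix (Fin m) (Fin n) ℝ) (i : Fin m) : 0 ≤ sval X i :=
  Real.sqrt_nonneg _

theorem sval_le_frobNorm (X : Matrix (Fin m) (Fin n) ℝ) (i : Fin m) : sval X i ≤ frobNorm X := by
  have hA := isHermitian_mul_conjTranspose_self X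
  have hsum : ∑ j, hA.eigenvalues j = ∑ a, ∑ b, X a b ^ 2 := by
    have := hA.trace_eq_sum_eigenvalues
    simp only [RCLike.ofReal_real_eq_id, id] at this
    rw [← this]
    simp [Matrix.trace, Matrix.mul_apply, sq]
  refine Real.sqrt_le_sqrt ?_
  rw [← hsum]
  exact Finset.single_le_sum (fun j _ => eigenvalues_self_mul_conjTranspose_nonneg X j)
    (Finset.mem_univ _)

end SingularValues

theorem Real.rpow_le_rpow_add_mul_sub {p a b : ℝ} (hp0 : 0 ≤ p) (hp1 : p ≤ 1) (ha : 0 ≤ a)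
    (hb : 0 < b) : a ^ p ≤ b ^ p + p * b ^ (p - 1) * (a - b) := by
  have hbern := rpow_one_add_le_one_add_mul_self (s := a / b - 1)
    (by linarith [div_nonneg ha hb.le]) hp0 hp1
  rw [add_sub_cancel, Real.div_rpow ha hb.le, div_le_iff₀ (Real.rpow_pos_of_pos hb p)] at hbern
  calc a ^ p ≤ (1 + p * (a / b - 1)) * b ^ p := hbern
    _ = b ^ p + p * (b ^ p / b) * (a - b) := by field_simp
    _ = b ^ p + p * b ^ (p - 1) * (a - b) := by rw [← Real.rpow_sub_one hb.ne']

theorem sum_rpow_add_le_sum_rpow_add_weighted {ι : Type*} [Fintype ι] {p : ℝ} (hp0 : 0 ≤ p)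
    (hp1 : p ≤ 1) {s s' ε ε' : ι → ℝ} (hs' : ∀ i, 0 ≤ s' i + ε' i) (hε : ∀ i, ε' i ≤ ε i)
    (hs : ∀ i, 0 < s i + ε i) :
    ∑ i, (s' i + ε' i) ^ p ≤ ∑ i, (s i + ε i) ^ p
      + (∑ i, p * (s i + ε i) ^ (p - 1) * s' i - ∑ i, p * (s i + ε i) ^ (p - 1) * s i) := by
  rw [← Finset.sum_sub_distrib, ← Finset.sum_add_distrib]
  gcongr with i
  calc (s' i + ε' i) ^ p ≤ (s' i + ε i) ^ p :=
        Real.rpow_le_rpow (hs' i) (by linarith [hε i]) hp0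
    _ ≤ (s i + ε i) ^ p + p * (s i + ε i) ^ (p - 1) * (s' i + ε i - (s i + ε i)) :=
        Real.rpow_le_rpow_add_mul_sub hp0 hp1 (by linarith [hs' i, hε i]) (hs i)
    _ = _ := by ring

section Algorithm

variable {m n : ℕ}

noncomputable def potential (f : Matrix (Fin m) (Fin n) ℝ → ℝ) (lam p β : ℝ)
    (X Xprev : Matrix (Fin m) (Fin n) ℝ) (ε : Fin m → ℝ) : ℝ :=
  f X + lam * ∑ i, (sval X i + ε i) ^ p + β / 2 * frobNorm (X - Xprev) ^ 2

theorem add_sum_sval_rpow_le_potential {f : Matrix (Fin m) (Fin n) ℝ → ℝ} {lam p β : ℝ}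
    (hlam : 0 ≤ lam) (hp : 0 ≤ p) (hβ : 0 ≤ β) (X Xprev : Matrix (Fin m) (Fin n) ℝ)
    {ε : Fin m → ℝ} (hε : ∀ i, 0 ≤ ε i) :
    f X + lam * ∑ i, sval X i ^ p ≤ potential f lam p β X Xprev ε := by
  have hsum : ∑ i, sval X i ^ p ≤ ∑ i, (sval X i + ε i) ^ p :=
    Finset.sum_le_sum fun i _ =>
      Real.rpow_le_rpow (sval_nonneg X i) (le_add_of_nonneg_right (hε i)) hp
  have hprox : 0 ≤ β / 2 * frobNorm (X - Xprev) ^ 2 := by positivity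
  unfold potential
  linarith [mul_le_mul_of_nonneg_left hsum hlam]

theorem add_mul_sq_le_of_lt_sqrt {L β a : ℝ} (hL : 0 ≤ L) (hβ : 0 < β) (ha0 : 0 ≤ a)
    (ha : a < √(β / (3 * L + β))) : (β + L) * a ^ 2 ≤ β := by
  rw [Real.lt_sqrt ha0, lt_div_iff₀ (by linarith)] at ha
  nlinarith [mul_nonneg hL (sq_nonneg a)]

theorem potential_succ_le {p lam Lf β a : ℝ} (hp0 : 0 < p) (hp1 : p < 1) (hlam : 0 ≤ lam)
    (hβ : Lf < β) {f : Matrix (Fin m) (Fin n) ℝ → ℝ}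
    {Gf : Matrix (Fin m) (Fin n) ℝ → Matrix (Fin m) (Fin n) ℝ}
    (hgrad : ∀ Z, HasFrobGradientAt f (Gf Z) Z)
    (hlip : ∀ Z W, frobNorm (Gf Z - Gf W) ≤ Lf * frobNorm (Z - W))
    (ha0 : 0 ≤ a) (ha : (β + Lf) * a ^ 2 ≤ β) {X₀ X₁ X₂ Y : Matrix (Fin m) (Fin n) ℝ}
    (hY : Y = X₁ + a • (X₁ - X₀)) {ε₁ ε₂ : Fin m → ℝ} (hε₂ : ∀ i, 0 < ε₂ i)
    (hε : ∀ i, ε₂ i ≤ ε₁ i)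
    (hmin : f Y + finner X₂ (Gf Y) + β / 2 * frobNorm (X₂ - Y) ^ 2
          + β / 2 * frobNorm (X₂ - X₁) ^ 2
          + lam * ∑ i, (p * (sval X₁ i + ε₁ i) ^ (p - 1)) * sval X₂ i
        ≤ f Y + finner X₁ (Gf Y) + β / 2 * frobNorm (X₁ - Y) ^ 2
          + β / 2 * frobNorm (X₁ - X₁) ^ 2
          + lam * ∑ i, (p * (sval X₁ i + ε₁ i) ^ (p - 1)) * sval X₁ i) :
    potential f lam p β X₂ X₁ ε₂ ≤ potential f lam p β X₁ X₀ ε₁ := by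
  have hXY : frobNorm (X₁ - Y) = a * frobNorm (X₁ - X₀) := by
    rw [hY, frobNorm_eq_norm, frobNorm_eq_norm, sub_add_cancel_left, norm_neg, norm_smul,
      Real.norm_of_nonneg ha0]
  have hupper := (abs_le.1 (abs_sub_sub_finner_le hgrad hlip Y X₂)).2
  have hlower := (abs_le.1 (abs_sub_sub_finner_le hgrad hlip Y X₁)).1
  rw [finner_comm, finner_sub_left] at hupper hlower
  have hreweight := sum_rpow_add_le_sum_rpow_add_weighted hp0.le hp1.le
    (fun i => (add_pos_of_nonneg_of_pos (sval_nonneg X₂ i) (hε₂ i)).le) hε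
    (fun i => add_pos_of_nonneg_of_pos (sval_nonneg X₁ i) ((hε₂ i).trans_le (hε i)))
  have hgap : Lf / 2 * frobNorm (X₂ - Y) ^ 2 ≤ β / 2 * frobNorm (X₂ - Y) ^ 2 := by
    gcongr
  have hextra : (β + Lf) / 2 * frobNorm (X₁ - Y) ^ 2 ≤ β / 2 * frobNorm (X₁ - X₀) ^ 2 := by
    rw [hXY, mul_pow, ← mul_assoc, div_mul_eq_mul_div]
    gcongr
  rw [sub_self, frobNorm_eq_norm 0, norm_zero] at hmin
  unfold potential
  linarith [mul_le_mul_of_nonneg_left hreweight hlam]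

end Algorithm

section Bounds

variable {m n : ℕ}

theorem frobNorm_le_of_eq_add_smul_sub {X X' Y : Matrix (Fin m) (Fin n) ℝ} {a R : ℝ}
    (hY : Y = X + a • (X - X')) (ha : 0 ≤ a) (hX : frobNorm X ≤ R) (hX' : frobNorm X' ≤ R) :
    frobNorm Y ≤ (1 + 2 * a) * R := by
  rw [frobNorm_eq_norm] at hX hX' ⊢
  calc ‖Y‖ ≤ ‖X‖ + a * (‖X‖ + ‖X'‖) := by
        rw [hY]
        refine (norm_add_le _ _).trans (add_le_add_right ?_ _)
        rw [norm_smul, Real.norm_of_nonneg ha]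
        exact mul_le_mul_of_nonneg_left (norm_sub_le _ _) ha
    _ ≤ R + a * (R + R) := by gcongr
    _ = (1 + 2 * a) * R := by ring

theorem sval_gradient_step_le {Gf : Matrix (Fin m) (Fin n) ℝ → Matrix (Fin m) (Fin n) ℝ}
    {L β R : ℝ} (hL : 0 ≤ L) (hβ : 0 < β)
    (hlip : ∀ Z W, frobNorm (Gf Z - Gf W) ≤ L * frobNorm (Z - W))
    {X Y : Matrix (Fin m) (Fin n) ℝ} (hX : frobNorm X ≤ R) (hY : frobNorm Y ≤ R) (i : Fin m) :
    sval ((1 / 2 : ℝ) • (X + Y) - (1 / (2 * β)) • Gf Y) i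
      ≤ R + (frobNorm (Gf 0) + L * R) / (2 * β) := by
  refine (sval_le_frobNorm _ i).trans ?_
  simp only [frobNorm_eq_norm] at hlip hX hY ⊢
  have hG : ‖Gf Y‖ ≤ ‖Gf 0‖ + L * R :=
    calc ‖Gf Y‖ ≤ ‖Gf 0‖ + ‖Gf Y - Gf 0‖ := norm_le_norm_add_norm_sub' _ _
      _ ≤ ‖Gf 0‖ + L * R := by gcongr; simpa using (hlip Y 0).trans (by gcongr; simpa using hY)
  calc ‖(1 / 2 : ℝ) • (X + Y) - (1 / (2 * β)) • Gf Y‖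
      ≤ 1 / 2 * (‖X‖ + ‖Y‖) + 1 / (2 * β) * ‖Gf Y‖ := by
        refine (norm_sub_le _ _).trans ?_
        rw [norm_smul, norm_smul, Real.norm_of_nonneg (by norm_num),
          Real.norm_of_nonneg (by positivity)]
        gcongr
        exact norm_add_le _ _
    _ ≤ 1 / 2 * (R + R) + 1 / (2 * β) * (‖Gf 0‖ + L * R) := by gcongr
    _ = R + (‖Gf 0‖ + L * R) / (2 * β) := by ring

end Bounds

theorem stmt_4_general {m n : ℕ} (hm : 0 < m) (p lam Lf β alphabar : ℝ)
    (hp0 : 0 < p) (hp1 : p < 1) (hlam : 0 < lam)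
    (hLf : 0 ≤ Lf) (hβ : Lf < β)
    (hab1 : alphabar < Real.sqrt (β / (3 * Lf + β)))
    (f : Matrix (Fin m) (Fin n) ℝ → ℝ)
    (Gf : Matrix (Fin m) (Fin n) ℝ → Matrix (Fin m) (Fin n) ℝ)
    (hgrad : ∀ Z, HasFrobGradientAt f (Gf Z) Z)
    (hlip : ∀ Z W, frobNorm (Gf Z - Gf W) ≤ Lf * frobNorm (Z - W))
    (hlevel : ∀ cc : ℝ, ∃ R : ℝ, ∀ Z : Matrix (Fin m) (Fin n) ℝ,
      f Z + lam * (∑ i, sval Z i ^ p) ≤ cc → frobNorm Z ≤ R)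
    (X Y : ℕ → Matrix (Fin m) (Fin n) ℝ) (ε : ℕ → Fin m → ℝ)
    (hε : ∀ k i, 0 < ε k i) (hεmono : ∀ k i, ε (k + 1) i ≤ ε k i)
    (α : ℕ → ℝ) (hα : ∀ k, α k ∈ Set.Icc 0 alphabar)
    (hY : ∀ k, Y k = X k + α k • (X k - X (k - 1)))
    (hmin : ∀ k, ∀ Z : Matrix (Fin m) (Fin n) ℝ,
      f (Y k) + finner (X (k + 1)) (Gf (Y k))
          + β / 2 * frobNorm (X (k + 1) - Y k) ^ 2
          + β / 2 * frobNorm (X (k + 1) - X k) ^ 2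
          + lam * ∑ i, (p * (sval (X k) i + ε k i) ^ (p - 1)) * sval (X (k + 1)) i
        ≤ f (Y k) + finner Z (Gf (Y k))
          + β / 2 * frobNorm (Z - Y k) ^ 2
          + β / 2 * frobNorm (Z - X k) ^ 2
          + lam * ∑ i, (p * (sval (X k) i + ε k i) ^ (p - 1)) * sval Z i) :
    (hC2 : ContDiff ℝ 2 f) →
    (∃ R : ℝ, ∀ k : ℕ, frobNorm (X k) ≤ R ∧ frobNorm (Y k) ≤ R) ∧
    ∃ C₁ : ℝ, 0 < C₁ ∧ ∀ k : ℕ,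
      sval ((1 / 2 : ℝ) • (X k + Y k) - (1 / (2 * β)) • Gf (Y k)) ⟨0, hm⟩ ≤ C₁ := by
  intro _
  have hβ0 : 0 < β := hLf.trans_lt hβ
  have hdecrease : Antitone fun k => potential f lam p β (X k) (X (k - 1)) (ε k) :=
    antitone_nat_of_succ_le fun k =>
      potential_succ_le hp0 hp1 hlam.le hβ hgrad hlip (hα k).1
        (add_mul_sq_le_of_lt_sqrt hLf hβ0 (hα k).1 ((hα k).2.trans_lt hab1)) (hY k)
        (hε (k + 1)) (hεmono k) (hmin k (X k))
  obtain ⟨R, hR⟩ := hlevel (potential f lam p β (X 0) (X (0 - 1)) (ε 0))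
  have hX : ∀ k, frobNorm (X k) ≤ R := fun k =>
    hR _ ((add_sum_sval_rpow_le_potential hlam.le hp0.le hβ0.le _ _ fun i => (hε k i).le).trans
      (hdecrease (Nat.zero_le k)))
  have hR0 : 0 ≤ R := (Real.sqrt_nonneg _).trans (hX 0)
  have hab0 : 0 ≤ alphabar := (hα 0).1.trans (hα 0).2
  set R' := (1 + 2 * alphabar) * R
  have hbounded : ∀ k, frobNorm (X k) ≤ R' ∧ frobNorm (Y k) ≤ R' := fun k =>
    ⟨(hX k).trans (le_mul_of_one_le_left hR0 (by linarith)),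
      (frobNorm_le_of_eq_add_smul_sub (hY k) (hα k).1 (hX k) (hX (k - 1))).trans
        (mul_le_mul_of_nonneg_right (by linarith [(hα k).2]) hR0)⟩
  refine ⟨⟨R', hbounded⟩, max (R' + (frobNorm (Gf 0) + Lf * R') / (2 * β)) 1, by positivity,
    fun k => ?_⟩
  exact (sval_gradient_step_le hLf hβ0 hlip (hbounded k).1 (hbounded k).2 _).trans
    (le_max_left _ _)

/-- Boundedness of the iterates: if in addition `f` is twice continuously
differentiable, the sequences `{X^k}` and `{Y^k}` are bounded, and the largest singular
value of `(X^k + Y^k)/2 − ∇f(Y^k)/(2β)` is uniformly bounded by some constant `C₁ > 0`.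
(Here `X^{−1} = X^0`, realized by truncated subtraction.) -/
theorem stmt_4 {m n : ℕ} (hm : 0 < m) (hmn : m ≤ n) (p lam Lf β alphabar : ℝ)
    (hp0 : 0 < p) (hp1 : p < 1) (hlam : 0 < lam)
    (hLf : 0 ≤ Lf) (hβ : Lf < β)
    (hab0 : 0 < alphabar) (hab1 : alphabar < Real.sqrt (β / (3 * Lf + β)))
    (f : Matrix (Fin m) (Fin n) ℝ → ℝ)
    (Gf : Matrix (Fin m) (Fin n) ℝ → Matrix (Fin m) (Fin n) ℝ)
    (hgrad : ∀ Z, HasFrobGradientAt f (Gf Z) Z)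
    (hlip : ∀ Z W, frobNorm (Gf Z - Gf W) ≤ Lf * frobNorm (Z - W))
    (hlevel : ∀ cc : ℝ, ∃ R : ℝ, ∀ Z : Matrix (Fin m) (Fin n) ℝ,
      f Z + lam * (∑ i, sval Z i ^ p) ≤ cc → frobNorm Z ≤ R)
    (X Y : ℕ → Matrix (Fin m) (Fin n) ℝ) (ε : ℕ → Fin m → ℝ)
    (hε : ∀ k i, 0 < ε k i) (hεmono : ∀ k i, ε (k + 1) i ≤ ε k i)
    (α : ℕ → ℝ) (hα : ∀ k, α k ∈ Set.Icc 0 alphabar)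
    (hY : ∀ k, Y k = X k + α k • (X k - X (k - 1)))
    (hmin : ∀ k, ∀ Z : Matrix (Fin m) (Fin n) ℝ,
      f (Y k) + finner (X (k + 1)) (Gf (Y k))
          + β / 2 * frobNorm (X (k + 1) - Y k) ^ 2
          + β / 2 * frobNorm (X (k + 1) - X k) ^ 2
          + lam * ∑ i, (p * (sval (X k) i + ε k i) ^ (p - 1)) * sval (X (k + 1)) i
        ≤ f (Y k) + finner Z (Gf (Y k))
          + β / 2 * frobNorm (Z - Y k) ^ 2
          + β / 2 * frobNorm (Z - X k) ^ 2
          + lam * ∑ i, (p * (sval (X k) i + ε k i) ^ (p - 1)) * sval Z i) :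
    (hC2 : ContDiff ℝ 2 f) →
    (∃ R : ℝ, ∀ k : ℕ, frobNorm (X k) ≤ R ∧ frobNorm (Y k) ≤ R) ∧
    ∃ C₁ : ℝ, 0 < C₁ ∧ ∀ k : ℕ,
      sval ((1 / 2 : ℝ) • (X k + Y k) - (1 / (2 * β)) • Gf (Y k)) ⟨0, hm⟩ ≤ C₁ :=
  stmt_4_general hm p lam Lf β alphabar hp0 hp1 hlam hLf hβ hab1 f Gf hgrad hlip hlevel X Y ε hε
    hεmono α hα hY hmin
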